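/- arXiv:2605.23432 — 2 statements merged into one kernel-verified Lean document; each statement's English description precedes it below -/
import Mathlib

section
/- Byzantine creators alone cannot certify structural precedence: if for every round t every correct creator that sees A at round t also sees B at round t (i.e., V_A(t) \ Byz ⊆ V_B(t)), then Δ(A,B,t) = C_A(t) − C_B(t) ≤ f for all t, and consequently A ▷ B does not hold. -/
/-- An AUF with explicit visibility sets over the `n` creators. -/
structure AUF (n : ℕ) where
  r : ℕ
  V : ℕ → Finset (Fin n)

/-- Visibility count `C_X(t) = |V_X(t)|`. -/
def cnt {n : ℕ} (X : AUF n) (t : ℕ) : ℕ := (X.V t).card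

/-- Stopping time `h_X = min({t ≥ r(X) | C_X(t) ≥ 2f+1} ∪ {r(X)+W})`. -/
noncomputable def stopTime {n : ℕ} (f W : ℕ) (X : AUF n) : ℕ :=
  sInf ({t | X.r ≤ t ∧ 2 * f + 1 ≤ cnt X t} ∪ {X.r + W})

/-- `X` is mature iff `C_X(h_X) ≥ 2f+1`. -/
def mature {n : ℕ} (f W : ℕ) (X : AUF n) : Prop :=
  2 * f + 1 ≤ cnt X (stopTime f W X)

/-- Coexistence-alignment round `s(A,B)`. -/
def coexist {n : ℕ} (A B : AUF n) : ℕ := max A.r B.r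

/-- Pair horizon `H(A,B)`. -/
noncomputable def horizon {n : ℕ} (f W : ℕ) (A B : AUF n) : ℕ :=
  max (stopTime f W A) (stopTime f W B)

/-- Visibility delta `Δ(A,B,t)` over ℤ. -/
def delta {n : ℕ} (A B : AUF n) (t : ℕ) : ℤ := (cnt A t : ℤ) - (cnt B t : ℤ)

/-- Structural visibility precedence `A ▷ B`. -/
def SVP {n : ℕ} (f W : ℕ) (A B : AUF n) : Prop :=
  mature f W A ∧ mature f W B ∧
  (∃ t, coexist A B < t ∧ t ≤ horizon f W A B ∧ (f + 1 : ℤ) ≤ delta A B t) ∧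
  ¬ ∃ t, coexist A B < t ∧ t ≤ horizon f W A B ∧ (f + 1 : ℤ) ≤ delta B A t

/-- Byzantine creators alone cannot certify structural precedence: if every
correct creator seeing `A` also sees `B` (at every round), then
`Δ(A,B,t) ≤ f` for all `t`, and `A ▷ B` fails. -/
theorem byz_cannot_certify (n f W : ℕ) (hn : 3 * f + 1 ≤ n)
    (Byz : Finset (Fin n)) (hByz : Byz.card ≤ f)
    (A B : AUF n) (hsub : ∀ t, A.V t \ Byz ⊆ B.V t) :
    (∀ t, delta A B t ≤ (f : ℤ)) ∧ ¬ SVP f W A B := by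
  have key : ∀ t, delta A B t ≤ (f : ℤ) := by
    intro t
    have h1 : A.V t ⊆ B.V t ∪ Byz := by
      intro x hx
      by_cases hb : x ∈ Byz
      · exact Finset.mem_union_right _ hb
      · exact Finset.mem_union_left _ (hsub t (Finset.mem_sdiff.mpr ⟨hx, hb⟩))
    have h2 : (A.V t).card ≤ (B.V t).card + Byz.card :=
      le_trans (Finset.card_le_card h1) (Finset.card_union_le _ _)
    have h3 : (A.V t).card ≤ (B.V t).card + f := le_trans h2 (by omega)
    unfold delta cnt
    push_cast
    omega
  refine ⟨key, ?_⟩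
  rintro ⟨_, _, ⟨t, _, _, ht⟩, _⟩
  have := key t
  omega
end

section
/- Existence of a causally consistent, structurally fair linearization (Theorems 3 and 6): let V be a finite type, E_c a relation on V that is round-monotone for some ρ : V → ℕ, E_s an arbitrary relation on V, and E the union of E_c and E_s. Then there exists a strict linear order ≺ on V such that (i) E_c x y implies x ≺ y (causal consistency), and (ii) whenever E_s x y holds and there is no E-path from y back to x (i.e., the transitive closure of E does not relate y to x, so x and y lie in distinct strongly connected components), then x ≺ y (every enforceable evidence-backed precedence edge is preserved). -/
/-!
Reachability `ReflTransGen (Ec ∪ Es)` is a preorder whose strict part holds exactly between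
distinct strongly connected components, so every enforceable `Es`-edge is strict in it. On a
finite preorder the number of strict predecessors strictly increases along `<` and is constant
on each component; ordering lexicographically by this count, then by `ρ`, then by an arbitrary
injection into `ℕ` gives a strict total order. An `Ec`-edge either goes strictly forward in the
preorder or stays inside a component, where round-monotonicity puts it in order.
-/

open Set

section FinitePreorder

variable {α : Type*} [Preorder α]

theorem ncard_Iio_strictMono [Finite α] : StrictMono fun x : α => (Iio x).ncard :=
  fun _ _ h => ncard_lt_ncard (Iio_ssubset_Iio h)

theorem Iio_eq_of_le_of_ge {x y : α} (hxy : x ≤ y) (hyx : y ≤ x) : Iio x = Iio y :=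
  (Iio_subset_Iio hxy).antisymm (Iio_subset_Iio hyx)

theorem exists_isStrictTotalOrder_extending_lt_ordered_by [Finite α] {β : Type*}
    [LinearOrder β] (ρ : α → β) :
    ∃ lt : α → α → Prop, IsStrictTotalOrder α lt ∧ (∀ x y, x < y → lt x y) ∧
      (∀ x y, x ≤ y → ρ x < ρ y → lt x y) := by
  obtain ⟨ι, hι⟩ := Countable.exists_injective_nat α
  let key : α → ℕ ×ₗ β ×ₗ ℕ := fun x => toLex ((Iio x).ncard, toLex (ρ x, ι x))
  have key_injective : key.Injective := fun x y h => by
    simp only [key, toLex_inj, Prod.mk.injEq] at h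
    exact hι h.2.2
  have key_lt_of_lt {x y : α} (h : x < y) : key x < key y :=
    Prod.Lex.toLex_lt_toLex.2 (Or.inl (ncard_Iio_strictMono h))
  refine ⟨fun x y => key x < key y,
    (RelEmbedding.preimage ⟨key, key_injective⟩ (· < ·)).isStrictTotalOrder,
    fun x y h => key_lt_of_lt h, fun x y hxy hρ => ?_⟩
  by_cases hyx : y ≤ x
  · refine Prod.Lex.toLex_lt_toLex.2 (Or.inr ⟨?_, Prod.Lex.toLex_lt_toLex.2 (Or.inl hρ)⟩)
    exact congrArg ncard (Iio_eq_of_le_of_ge hxy hyx)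
  · exact key_lt_of_lt (lt_of_le_not_ge hxy hyx)

end FinitePreorder

/-- Existence of a causally consistent, structurally fair linearization:
given round-monotone causal edges `Ec` and arbitrary evidence edges `Es` on a
finite type, there is a strict linear order that extends `Ec` and preserves
every enforceable `Es`-edge (one whose endpoints are not connected back by a
path in `Ec ∪ Es`, i.e., lie in distinct strongly connected components). -/
theorem fair_linearization_exists {V : Type*} [Fintype V]
    (Ec Es : V → V → Prop) (ρ : V → ℕ)
    (hmono : ∀ x y, Ec x y → ρ x < ρ y) :
    ∃ lt : V → V → Prop, IsStrictTotalOrder V lt ∧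
      (∀ x y, Ec x y → lt x y) ∧
      (∀ x y, Es x y →
        ¬ Relation.TransGen (fun a b => Ec a b ∨ Es a b) y x → lt x y) := by
  set E : V → V → Prop := fun a b => Ec a b ∨ Es a b
  let _ : Preorder V :=
    { le := Relation.ReflTransGen E
      le_refl := fun _ => .refl
      le_trans := fun _ _ _ => .trans }
  obtain ⟨lt, hlt, hlt_ext, hlt_ρ⟩ := exists_isStrictTotalOrder_extending_lt_ordered_by ρ
  refine ⟨lt, hlt, fun x y h => hlt_ρ x y (.single (.inl h)) (hmono x y h), fun x y h hyx => ?_⟩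
  refine hlt_ext x y ⟨.single (.inr h), fun hle => ?_⟩
  obtain rfl | hyx' := Relation.reflTransGen_iff_eq_or_transGen.mp hle
  exacts [hyx (.single (.inr h)), hyx hyx']
end
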